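/- arXiv:2403.14771 — 2 statements merged into one kernel-verified Lean document; each statement's English description precedes it below -/
import Mathlib

section
/- Let B : 𝕋^d → L(V,V) be a continuous family of linear maps on a finite-dimensional normed space V, and suppose there exist C > 0 and 0 < ρ < 1 with |B(θ)B(θ+ω)⋯B(θ+(k−1)ω)| ≤ Cρ^k for all k ≥ 0 and θ ∈ 𝕋^d. Then for every continuous η : 𝕋^d → V, the equation u(θ) − B(θ)u(θ+ω) = η(θ) has a unique continuous solution, given by the uniformly convergent series u(θ) = Σ_{k=0}^∞ B(θ)B(θ+ω)⋯B(θ+(k−1)ω) η(θ+kω). -/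
open ContinuousLinearMap

/-- The `d`-dimensional torus. -/
abbrev Torus (d : ℕ) := Fin d → AddCircle (1 : ℝ)

/-- The twisted product `B(θ) B(θ+ω) ⋯ B(θ+(k-1)ω)`. -/
noncomputable def cocycle {d : ℕ} {V : Type*} [NormedAddCommGroup V] [NormedSpace ℝ V]
    (ω : Torus d) (B : Torus d → V →L[ℝ] V) : ℕ → Torus d → V →L[ℝ] V
  | 0, _ => 1
  | k + 1, θ => B θ ∘L cocycle ω B k (θ + ω)

/-- The candidate solution `u(θ) = Σ_{k≥0} B(θ)⋯B(θ+(k-1)ω) η(θ+kω)`. -/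
noncomputable def seriesSol {d : ℕ} {V : Type*} [NormedAddCommGroup V] [NormedSpace ℝ V]
    (ω : Torus d) (B : Torus d → V →L[ℝ] V) (η : Torus d → V) (θ : Torus d) : V :=
  ∑' k : ℕ, cocycle ω B k θ (η (θ + k • ω))

lemma cocycle_continuous {d : ℕ} {V : Type*} [NormedAddCommGroup V] [NormedSpace ℝ V]
    (ω : Torus d) (B : Torus d → V →L[ℝ] V) (hBcont : Continuous B) :
    ∀ k, Continuous fun θ => cocycle ω B k θ := by
  intro k
  induction k generalizing ω B hBcont with
  | zero => exact continuous_const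
  | succ n ih =>
    exact hBcont.clm_comp ((ih ω B hBcont).comp (continuous_id.add continuous_const))

lemma exists_bound_of_continuous {d : ℕ} {V : Type*} [NormedAddCommGroup V]
    (f : Torus d → V) (hf : Continuous f) : ∃ M : ℝ, 0 ≤ M ∧ ∀ θ, ‖f θ‖ ≤ M := by
  obtain ⟨M, hM⟩ := (isCompact_range hf.norm).bddAbove
  refine ⟨max M 0, le_max_right _ _, fun θ => le_trans ?_ (le_max_left _ _)⟩
  exact hM ⟨θ, rfl⟩

/-- Contracting-case solvability of the twisted cohomological equation
`u(θ) - B(θ)u(θ+ω) = η(θ)`, with the solution given by the convergent series. -/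
theorem twisted_cohomological_contracting
    {d : ℕ} {V : Type*} [NormedAddCommGroup V] [NormedSpace ℝ V] [FiniteDimensional ℝ V]
    (ω : Torus d) (B : Torus d → V →L[ℝ] V)
    (hBcont : Continuous B)
    (C ρ : ℝ) (hC : 0 < C) (hρ0 : 0 < ρ) (hρ : ρ < 1)
    (hbound : ∀ k θ, ‖cocycle ω B k θ‖ ≤ C * ρ ^ k) :
    ∀ η : Torus d → V, Continuous η →
      Continuous (seriesSol ω B η) ∧
      (∀ θ, seriesSol ω B η θ - B θ (seriesSol ω B η (θ + ω)) = η θ) ∧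
      (∀ u : Torus d → V, Continuous u →
        (∀ θ, u θ - B θ (u (θ + ω)) = η θ) → u = seriesSol ω B η) := by
  intro η hη
  obtain ⟨M, hM0, hM⟩ := exists_bound_of_continuous η hη
  -- bound on each term
  have hterm : ∀ k (θ : Torus d), ‖cocycle ω B k θ (η (θ + k • ω))‖ ≤ C * M * ρ ^ k := by
    intro k θ
    calc ‖cocycle ω B k θ (η (θ + k • ω))‖
        ≤ ‖cocycle ω B k θ‖ * ‖η (θ + k • ω)‖ := le_opNorm _ _
      _ ≤ (C * ρ ^ k) * M :=
          mul_le_mul (hbound k θ) (hM _) (norm_nonneg _)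
            (le_trans (norm_nonneg _) (hbound k θ))
      _ = C * M * ρ ^ k := by ring
  have hsum_geom : Summable fun k : ℕ => C * M * ρ ^ k :=
    (summable_geometric_of_lt_one hρ0.le hρ).mul_left _
  have htermcont : ∀ k : ℕ, Continuous fun θ => cocycle ω B k θ (η (θ + k • ω)) := by
    intro k
    exact (cocycle_continuous ω B hBcont k).clm_apply
      (hη.comp (continuous_id.add continuous_const))
  have hsummable : ∀ θ : Torus d, Summable fun k => cocycle ω B k θ (η (θ + k • ω)) := by
    intro θ
    exact Summable.of_norm (hsum_geom.of_nonneg_of_le (fun k => norm_nonneg _)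
      (fun k => hterm k θ))
  have hshift : ∀ (θ : Torus d) (k : ℕ), θ + (k + 1) • ω = (θ + ω) + k • ω := by
    intro θ k
    rw [succ_nsmul]
    abel
  have hcont : Continuous (seriesSol ω B η) := by
    refine continuous_tsum htermcont hsum_geom ?_
    intro k θ
    exact hterm k θ
  have heq : ∀ θ, seriesSol ω B η θ - B θ (seriesSol ω B η (θ + ω)) = η θ := by
    intro θ
    have h0 : seriesSol ω B η θ
        = η θ + ∑' k : ℕ, cocycle ω B (k + 1) θ (η (θ + (k + 1) • ω)) := by
      have := Summable.tsum_eq_zero_add (hsummable θ)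
      simpa [seriesSol, cocycle] using this
    have h1 : B θ (seriesSol ω B η (θ + ω))
        = ∑' k : ℕ, cocycle ω B (k + 1) θ (η (θ + (k + 1) • ω)) := by
      rw [seriesSol, (B θ).map_tsum (hsummable (θ + ω))]
      congr 1
      funext k
      rw [hshift θ k]
      rfl
    rw [h0, h1]
    abel
  refine ⟨hcont, heq, ?_⟩
  intro u hu hueq
  -- the difference w satisfies w θ = B θ (w (θ+ω))
  set w : Torus d → V := fun θ => u θ - seriesSol ω B η θ with hw
  have hwcont : Continuous w := hu.sub hcont
  have hwrec : ∀ θ, w θ = B θ (w (θ + ω)) := by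
    intro θ
    have h1 : u θ - B θ (u (θ + ω)) = seriesSol ω B η θ - B θ (seriesSol ω B η (θ + ω)) := by
      rw [hueq θ, heq θ]
    have h2 : u θ - seriesSol ω B η θ
        = B θ (u (θ + ω)) - B θ (seriesSol ω B η (θ + ω)) :=
      sub_eq_sub_iff_sub_eq_sub.mp h1
    simp only [hw, map_sub]
    exact h2
  have hwiter : ∀ (k : ℕ) (θ : Torus d), w θ = cocycle ω B k θ (w (θ + k • ω)) := by
    intro k
    induction k with
    | zero => intro θ; simp [cocycle]
    | succ n ih =>
      intro θ
      rw [hwrec θ, ih (θ + ω)]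
      rw [hshift θ n]
      rfl
  obtain ⟨Mw, hMw0, hMw⟩ := exists_bound_of_continuous w hwcont
  have hwzero : ∀ θ, w θ = 0 := by
    intro θ
    have hb : ∀ k : ℕ, ‖w θ‖ ≤ C * Mw * ρ ^ k := by
      intro k
      calc ‖w θ‖ = ‖cocycle ω B k θ (w (θ + k • ω))‖ := by rw [← hwiter k θ]
        _ ≤ ‖cocycle ω B k θ‖ * ‖w (θ + k • ω)‖ := le_opNorm _ _
        _ ≤ (C * ρ ^ k) * Mw :=
            mul_le_mul (hbound k θ) (hMw _) (norm_nonneg _)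
              (le_trans (norm_nonneg _) (hbound k θ))
        _ = C * Mw * ρ ^ k := by ring
    have hlim : Filter.Tendsto (fun k : ℕ => C * Mw * ρ ^ k) Filter.atTop (nhds 0) := by
      simpa using (tendsto_pow_atTop_nhds_zero_of_lt_one hρ0.le hρ).const_mul (C * Mw)
    have : ‖w θ‖ ≤ 0 :=
      le_of_tendsto_of_tendsto' tendsto_const_nhds hlim hb
    simpa using le_antisymm this (norm_nonneg _)
  funext θ
  have := hwzero θ
  rw [hw] at this
  exact sub_eq_zero.mp this
end

section
/- Newton–Kantorovich theorem: Let X, Y be Banach spaces, Ω ⊆ X open, x₀ ∈ Ω, and T ∈ C¹(Ω, Y) with DT(x₀) invertible. Assume constants λ, μ, ν > 0 with λμν < 1/2, ‖DT(x₀)⁻¹ T(x₀)‖ ≤ λ, ‖DT(x₀)⁻¹‖ ≤ μ, and ‖DT(x) − DT(x̂)‖ ≤ ν‖x − x̂‖ for all x, x̂ in the ball B_r(x₀), where r = (1 + √(1 − 2λμν))/(μν) and B_r(x₀) ⊆ Ω. Then the Newton iterates x_{k+1} = x_k − DT(x_k)⁻¹ T(x_k) are well-defined, remain in B_ρ(x₀)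 with ρ = (1 − √(1 − 2λμν))/(μν) ≤ r, and converge to the unique zero of T in the closed ball of radius ρ around x₀. -/
open Metric Set

/-! ### Auxiliary lemmas for the Newton–Kantorovich theorem -/

/-- Taylor-type estimate for a map with Lipschitz derivative on a convex set. -/
lemma nk_taylor {X Y : Type*} [NormedAddCommGroup X] [NormedSpace ℝ X]
    [NormedAddCommGroup Y] [NormedSpace ℝ Y]
    (T : X → Y) (T' : X → X →L[ℝ] Y) (s : Set X) (hs : Convex ℝ s)
    (hder : ∀ z ∈ s, HasFDerivAt T (T' z) z) (ν : ℝ)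
    (hlip : ∀ z ∈ s, ∀ z' ∈ s, ‖T' z - T' z'‖ ≤ ν * ‖z - z'‖)
    (x : X) (hx : x ∈ s) (y : X) (hy : y ∈ s) :
    ‖T y - T x - T' x (y - x)‖ ≤ ν / 2 * ‖y - x‖ ^ 2 := by
  set g : ℝ → Y := fun τ => T (x + τ • (y - x)) - τ • (T' x (y - x)) - T x with hg
  have hmem : ∀ τ ∈ Icc (0:ℝ) 1, x + τ • (y - x) ∈ s := by
    intro τ hτ
    have := hs hx hy (by linarith [hτ.1, hτ.2] : 0 ≤ 1 - τ) hτ.1 (by ring)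
    convert this using 1
    module
  have hderiv : ∀ τ ∈ Icc (0:ℝ) 1,
      HasDerivAt g ((T' (x + τ • (y - x)) - T' x) (y - x)) τ := by
    intro τ hτ
    have h1 : HasDerivAt (fun τ : ℝ => x + τ • (y - x)) (y - x) τ := by
      simpa using ((hasDerivAt_id τ).smul_const (y - x)).const_add x
    have h2 : HasDerivAt (fun τ : ℝ => T (x + τ • (y - x)))
        (T' (x + τ • (y - x)) (y - x)) τ :=
      (hder _ (hmem τ hτ)).comp_hasDerivAt τ h1
    have h3 : HasDerivAt (fun τ : ℝ => τ • (T' x (y - x))) (T' x (y - x)) τ := by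
      simpa using (hasDerivAt_id τ).smul_const (T' x (y - x))
    exact (h2.sub h3).sub_const (T x)
  have key : ∀ τ ∈ Icc (0:ℝ) 1, ‖g τ‖ ≤ ν / 2 * ‖y - x‖ ^ 2 * τ ^ 2 := by
    have hBd : ∀ τ : ℝ, HasDerivAt (fun τ : ℝ => ν / 2 * ‖y - x‖ ^ 2 * τ ^ 2)
        (ν * ‖y - x‖ ^ 2 * τ) τ := by
      intro τ
      have := ((hasDerivAt_pow 2 τ).const_mul (ν / 2 * ‖y - x‖ ^ 2))
      exact this.congr_deriv (by norm_num; ring)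
    apply image_norm_le_of_norm_deriv_right_le_deriv_boundary
      (f' := fun τ => ((T' (x + τ • (y - x)) - T' x) (y - x)))
      (B' := fun τ => ν * ‖y - x‖ ^ 2 * τ)
      (fun τ hτ => (hderiv τ hτ).continuousAt.continuousWithinAt)
      (fun τ hτ => (hderiv τ (Ico_subset_Icc_self hτ)).hasDerivWithinAt)
      ?_ hBd ?_
    · show ‖T (x + (0:ℝ) • (y - x)) - (0:ℝ) • (T' x (y - x)) - T x‖ ≤ ν / 2 * ‖y - x‖ ^ 2 * 0 ^ 2
      simp
    · intro τ hτ
      have hτ' : τ ∈ Icc (0:ℝ) 1 := Ico_subset_Icc_self hτ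
      calc ‖(T' (x + τ • (y - x)) - T' x) (y - x)‖
          ≤ ‖T' (x + τ • (y - x)) - T' x‖ * ‖y - x‖ :=
            ContinuousLinearMap.le_opNorm _ _
        _ ≤ ν * ‖x + τ • (y - x) - x‖ * ‖y - x‖ := by
            gcongr; exact hlip _ (hmem τ hτ') _ hx
        _ = ν * ‖y - x‖ ^ 2 * τ := by
            rw [add_sub_cancel_left, norm_smul, Real.norm_eq_abs,
              abs_of_nonneg hτ'.1]; ring
  have h1 := key 1 (by norm_num)
  have : g 1 = T y - T x - T' x (y - x) := by
    show T (x + (1:ℝ) • (y - x)) - (1:ℝ) • (T' x (y - x)) - T x = _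
    simp only [one_smul, add_sub_cancel]
    abel
  rw [this] at h1
  simpa using h1

/-- Norm bound on the inverse of `1 - t` when `‖t‖ < 1`, for continuous endomorphisms. -/
lemma nk_inv_norm {X : Type*} [NormedAddCommGroup X] [NormedSpace ℝ X] [CompleteSpace X]
    (t : X →L[ℝ] X) (h : ‖t‖ < 1) :
    ‖((Units.oneSub t h)⁻¹ : (X →L[ℝ] X)ˣ).val‖ ≤ (1 - ‖t‖)⁻¹ := by
  show ‖∑' n : ℕ, t ^ n‖ ≤ (1 - ‖t‖)⁻¹
  refine tsum_of_norm_bounded (hasSum_geometric_of_lt_one (norm_nonneg t) h) fun n => ?_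
  cases n with
  | zero => simp only [pow_zero]; exact ContinuousLinearMap.norm_id_le
  | succ n => exact norm_pow_le' t n.succ_pos

/-- Majorizing error sequence for the Newton–Kantorovich theorem. -/
noncomputable def nkEps (a s ρ : ℝ) : ℕ → ℝ
  | 0 => ρ
  | k + 1 => a / 2 * (nkEps a s ρ k) ^ 2 / (s + a * nkEps a s ρ k)

section nkEps

variable {a s ρ : ℝ}

lemma nkEps_zero : nkEps a s ρ 0 = ρ := rfl

lemma nkEps_succ (k : ℕ) :
    nkEps a s ρ (k + 1) = a / 2 * (nkEps a s ρ k) ^ 2 / (s + a * nkEps a s ρ k) := by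
  rw [nkEps]

lemma nkEps_nonneg (ha : 0 < a) (hs : 0 < s) (hρ : 0 ≤ ρ) : ∀ k, 0 ≤ nkEps a s ρ k := by
  intro k
  induction k with
  | zero => exact hρ
  | succ k ih =>
    have : 0 < s + a * nkEps a s ρ k := by positivity
    rw [nkEps]
    positivity

lemma nkEps_succ_le_half (ha : 0 < a) (hs : 0 < s) (hρ : 0 ≤ ρ) (k : ℕ) :
    nkEps a s ρ (k + 1) ≤ nkEps a s ρ k / 2 := by
  have h0 := nkEps_nonneg ha hs hρ k
  have hd : 0 < s + a * nkEps a s ρ k := by positivity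
  rw [nkEps, div_le_iff₀ hd]
  nlinarith

lemma nkEps_succ_le (ha : 0 < a) (hs : 0 < s) (hρ : 0 ≤ ρ) (k : ℕ) :
    nkEps a s ρ (k + 1) ≤ nkEps a s ρ k := by
  have := nkEps_succ_le_half ha hs hρ k
  have := nkEps_nonneg ha hs hρ k
  linarith

lemma nkEps_le_geom (ha : 0 < a) (hs : 0 < s) (hρ : 0 ≤ ρ) :
    ∀ k, nkEps a s ρ k ≤ ρ * (1 / 2) ^ k := by
  intro k
  induction k with
  | zero => simp [nkEps]
  | succ k ih =>
    have := nkEps_succ_le_half ha hs hρ k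
    calc nkEps a s ρ (k + 1) ≤ nkEps a s ρ k / 2 := this
      _ ≤ ρ * (1 / 2) ^ k / 2 := by linarith
      _ = ρ * (1 / 2) ^ (k + 1) := by ring

lemma nkEps_key (ha : 0 < a) (hs : 0 < s) (hρ : 0 ≤ ρ) (k : ℕ) :
    nkEps a s ρ (k + 1) - nkEps a s ρ (k + 2) =
      a / 2 * (nkEps a s ρ k - nkEps a s ρ (k + 1)) ^ 2 / (s + a * nkEps a s ρ (k + 1)) := by
  set e0 := nkEps a s ρ k
  set e1 := nkEps a s ρ (k + 1) with he1
  set e2 := nkEps a s ρ (k + 2) with he2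
  have h0 := nkEps_nonneg ha hs hρ k
  have h1 := nkEps_nonneg ha hs hρ (k + 1)
  have hd0 : 0 < s + a * e0 := by positivity
  have hd1 : 0 < s + a * e1 := by positivity
  have q1 : e1 * (s + a * e0) = a / 2 * e0 ^ 2 := by
    rw [he1]; show nkEps a s ρ (k+1) * _ = _
    rw [nkEps, div_mul_cancel₀ _ hd0.ne']
  have q2 : e2 * (s + a * e1) = a / 2 * e1 ^ 2 := by
    rw [he2]; show nkEps a s ρ (k+2) * _ = _
    rw [nkEps, div_mul_cancel₀ _ hd1.ne']
  rw [eq_div_iff hd1.ne']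
  nlinarith [q1, q2]

end nkEps

set_option maxHeartbeats 1000000 in
/-- Newton–Kantorovich theorem: under the classical smallness condition `λμν < 1/2`, the
Newton iterates are well defined, stay in the ball of radius `ρ` and converge to the
unique zero of `T` in the closed ball of radius `ρ` around `x₀`. -/
theorem newton_kantorovich
    {X Y : Type*} [NormedAddCommGroup X] [NormedSpace ℝ X] [CompleteSpace X]
    [NormedAddCommGroup Y] [NormedSpace ℝ Y] [CompleteSpace Y]
    (Ω : Set X) (hΩ : IsOpen Ω) (x₀ : X) (hx₀ : x₀ ∈ Ω)
    (T : X → Y) (T' : X → X →L[ℝ] Y)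
    (hT : ∀ x ∈ Ω, HasFDerivAt T (T' x) x) (hT'cont : ContinuousOn T' Ω)
    (e0 : X ≃L[ℝ] Y) (he0 : (e0 : X →L[ℝ] Y) = T' x₀)
    (lam mu nu : ℝ) (hlam : 0 < lam) (hmu : 0 < mu) (hnu : 0 < nu)
    (hsmall : lam * mu * nu < 1 / 2)
    (r ρ : ℝ)
    (hr : r = (1 + Real.sqrt (1 - 2 * lam * mu * nu)) / (mu * nu))
    (hρ : ρ = (1 - Real.sqrt (1 - 2 * lam * mu * nu)) / (mu * nu))
    (hball : Metric.closedBall x₀ r ⊆ Ω)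
    (h1 : ‖e0.symm (T x₀)‖ ≤ lam)
    (h2 : ‖(e0.symm : Y →L[ℝ] X)‖ ≤ mu)
    (h3 : ∀ x ∈ Metric.closedBall x₀ r, ∀ x' ∈ Metric.closedBall x₀ r,
      ‖T' x - T' x'‖ ≤ nu * ‖x - x'‖) :
    ρ ≤ r ∧
    ∃ x : ℕ → X, x 0 = x₀ ∧ (∀ k, x k ∈ Metric.closedBall x₀ ρ) ∧
      (∀ k, ∃ ek : X ≃L[ℝ] Y, (ek : X →L[ℝ] Y) = T' (x k) ∧
        x (k + 1) = x k - ek.symm (T (x k))) ∧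
      ∃ xs : X, Filter.Tendsto x Filter.atTop (nhds xs) ∧
        xs ∈ Metric.closedBall x₀ ρ ∧ T xs = 0 ∧
        ∀ y ∈ Metric.closedBall x₀ ρ, T y = 0 → y = xs := by
  -- Scalar setup
  set a : ℝ := mu * nu with ha_def
  have ha : 0 < a := mul_pos hmu hnu
  set s : ℝ := Real.sqrt (1 - 2 * lam * mu * nu) with hs_def
  have harg : 0 < 1 - 2 * lam * mu * nu := by nlinarith
  have hs : 0 < s := Real.sqrt_pos.mpr harg
  have hss : s ^ 2 = 1 - 2 * lam * a := by
    rw [hs_def, Real.sq_sqrt harg.le]; ring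
  have hslt1 : s < 1 := by nlinarith
  have haρ : a * ρ = 1 - s := by
    rw [hρ]; field_simp
  have har : a * r = 1 + s := by
    rw [hr]; field_simp
  have hρpos : 0 < ρ := by
    rw [hρ]; apply div_pos (by linarith) ha
  have hρr : ρ ≤ r := by
    rw [hρ, hr]
    exact (div_le_div_iff_of_pos_right ha).mpr (by linarith)
  -- Error sequence
  set ε : ℕ → ℝ := nkEps a s ρ with hε_def
  have hε0 : ε 0 = ρ := nkEps_zero
  have hεnn : ∀ k, 0 ≤ ε k := nkEps_nonneg ha hs hρpos.le
  have hεle : ∀ k, ε (k + 1) ≤ ε k := nkEps_succ_le ha hs hρpos.le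
  have hεgeom : ∀ k, ε k ≤ ρ * (1 / 2) ^ k := nkEps_le_geom ha hs hρpos.le
  have hεkey : ∀ k, ε (k + 1) - ε (k + 2) =
      a / 2 * (ε k - ε (k + 1)) ^ 2 / (s + a * ε (k + 1)) := nkEps_key ha hs hρpos.le
  have hεlam : ε 0 - ε 1 = lam := by
    have he1 : ε 1 = a / 2 * ρ ^ 2 / (s + a * ρ) := by
      rw [hε_def, nkEps_succ, nkEps_zero]
    rw [hε0, he1, haρ]
    have hden : s + (1 - s) = 1 := by ring
    rw [hden, div_one]
    have key : a * (ρ - a / 2 * ρ ^ 2) = a * lam := by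
      linear_combination (1 - (a * ρ + 1 - s) / 2) * haρ - (1 / 2) * hss
    have := mul_left_cancel₀ ha.ne' key
    linarith
  clear_value ε
  -- Analytic setup
  set q : Y →L[ℝ] X := (e0.symm : Y →L[ℝ] X) with hq_def
  set C : X → (X →L[ℝ] X) := fun z => q.comp (T' z) with hC_def
  set w : X → (X →L[ℝ] X) := fun z => 1 - C z with hw_def
  have hCw : ∀ z, C z = 1 - w z := fun z => (sub_sub_cancel 1 (C z)).symm
  set N : X → X := fun z => z - (Ring.inverse (C z)) (q (T z)) with hN_def
  set x : ℕ → X := fun k => N^[k] x₀ with hx_def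
  have hx0 : x 0 = x₀ := rfl
  have hxsucc : ∀ k, x (k + 1) = N (x k) := fun k => Function.iterate_succ_apply' N k x₀
  clear_value x
  have hrnn : 0 ≤ r := le_trans hρpos.le hρr
  have hsubρr : Metric.closedBall x₀ ρ ⊆ Metric.closedBall x₀ r :=
    closedBall_subset_closedBall hρr
  have hC0 : C x₀ = 1 := by
    ext v
    show q (T' x₀ v) = v
    rw [← he0]
    simp [hq_def]
  have hwnorm : ∀ z ∈ Metric.closedBall x₀ r, ‖w z‖ ≤ a * ‖z - x₀‖ := by
    intro z hz
    have hx₀r : x₀ ∈ Metric.closedBall x₀ r := mem_closedBall_self hrnn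
    have hwz : w z = q.comp (T' x₀ - T' z) := by
      rw [hw_def]
      simp only
      rw [← hC0, hC_def]
      simp only
      rw [ContinuousLinearMap.comp_sub]
    rw [hwz]
    calc ‖q.comp (T' x₀ - T' z)‖ ≤ ‖q‖ * ‖T' x₀ - T' z‖ := ContinuousLinearMap.opNorm_comp_le _ _
      _ ≤ mu * (nu * ‖x₀ - z‖) := by
          apply mul_le_mul h2 (h3 _ hx₀r _ hz) (norm_nonneg _) hmu.le
      _ = a * ‖z - x₀‖ := by rw [norm_sub_rev]; ring
  have hwlt : ∀ z ∈ Metric.closedBall x₀ ρ, ‖w z‖ < 1 := by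
    intro z hz
    have h4 := hwnorm z (hsubρr hz)
    have h5 : ‖z - x₀‖ ≤ ρ := mem_closedBall_iff_norm.mp hz
    have h6 : a * ‖z - x₀‖ ≤ a * ρ := mul_le_mul_of_nonneg_left h5 ha.le
    rw [haρ] at h6
    linarith
  have hunit : ∀ z ∈ Metric.closedBall x₀ ρ, IsUnit (C z) := by
    intro z hz
    rw [hCw z]
    exact isUnit_one_sub_of_norm_lt_one (hwlt z hz)
  have hinvC : ∀ z, ∀ hz : z ∈ Metric.closedBall x₀ ρ,
      Ring.inverse (C z) = ((Units.oneSub (w z) (hwlt z hz))⁻¹ : (X →L[ℝ] X)ˣ).val := by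
    intro z hz
    rw [hCw z]
    exact NormedRing.inverse_one_sub _ _
  have hkey : ∀ z ∈ Metric.closedBall x₀ ρ, ∀ v : Y,
      ‖(Ring.inverse (C z)) (q v)‖ ≤ mu / (1 - a * ‖z - x₀‖) * ‖v‖ := by
    intro z hz v
    have h5 : ‖z - x₀‖ ≤ ρ := mem_closedBall_iff_norm.mp hz
    have h6 : a * ‖z - x₀‖ ≤ 1 - s := by
      have := mul_le_mul_of_nonneg_left h5 ha.le
      rw [haρ] at this
      linarith
    have hpos : 0 < 1 - a * ‖z - x₀‖ := by linarith
    have hposw : 0 < 1 - ‖w z‖ := by linarith [hwlt z hz]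
    have hmon : (1 - ‖w z‖)⁻¹ ≤ (1 - a * ‖z - x₀‖)⁻¹ := by
      apply inv_anti₀ hpos
      linarith [hwnorm z (hsubρr hz)]
    rw [hinvC z hz]
    calc ‖((Units.oneSub (w z) (hwlt z hz))⁻¹ : (X →L[ℝ] X)ˣ).val (q v)‖
        ≤ ‖((Units.oneSub (w z) (hwlt z hz))⁻¹ : (X →L[ℝ] X)ˣ).val‖ * ‖q v‖ :=
          ContinuousLinearMap.le_opNorm _ _
      _ ≤ (1 - ‖w z‖)⁻¹ * (mu * ‖v‖) := by
          apply mul_le_mul (nk_inv_norm _ _) ?_ (norm_nonneg _) (by positivity)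
          calc ‖q v‖ ≤ ‖q‖ * ‖v‖ := ContinuousLinearMap.le_opNorm _ _
            _ ≤ mu * ‖v‖ := mul_le_mul_of_nonneg_right h2 (norm_nonneg _)
      _ ≤ (1 - a * ‖z - x₀‖)⁻¹ * (mu * ‖v‖) := by
          apply mul_le_mul_of_nonneg_right hmon (by positivity)
      _ = mu / (1 - a * ‖z - x₀‖) * ‖v‖ := by ring
  have happ : ∀ z ∈ Metric.closedBall x₀ ρ, ∀ u : X,
      C z ((Ring.inverse (C z)) u) = u := by
    intro z hz u
    have h7 : C z * Ring.inverse (C z) = 1 := Ring.mul_inverse_cancel _ (hunit z hz)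
    calc C z ((Ring.inverse (C z)) u) = (C z * Ring.inverse (C z)) u := rfl
      _ = u := by rw [h7]; rfl
  have happ' : ∀ z ∈ Metric.closedBall x₀ ρ, ∀ u : X,
      (Ring.inverse (C z)) (C z u) = u := by
    intro z hz u
    have h7 : Ring.inverse (C z) * C z = 1 := Ring.inverse_mul_cancel _ (hunit z hz)
    calc (Ring.inverse (C z)) (C z u) = (Ring.inverse (C z) * C z) u := rfl
      _ = u := by rw [h7]; rfl
  have hTC : ∀ z, T' z = (e0 : X →L[ℝ] Y).comp (C z) := by
    intro z
    ext v
    show T' z v = e0 (q (T' z v))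
    simp [hq_def]
  have hTstep : ∀ z ∈ Metric.closedBall x₀ ρ, T' z (N z - z) = -T z := by
    intro z hz
    have h8 : N z - z = -((Ring.inverse (C z)) (q (T z))) := by
      rw [hN_def]; simp
    rw [h8, map_neg, hTC z]
    show -((e0 : X →L[ℝ] Y) (C z ((Ring.inverse (C z)) (q (T z))))) = -T z
    rw [happ z hz]
    show -(e0 (e0.symm (T z))) = -T z
    rw [e0.apply_symm_apply]
  have htay := nk_taylor T T' (Metric.closedBall x₀ r) (convex_closedBall _ _)
    (fun z hz => hT z (hball hz)) nu h3
  -- Main induction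
  have main : ∀ k, ‖x k - x₀‖ ≤ ρ - ε k ∧ ‖x (k + 1) - x k‖ ≤ ε k - ε (k + 1) := by
    intro k
    induction k with
    | zero =>
      constructor
      · rw [hx0, hε0]; simp
      · have h9 : x 1 - x 0 = -(q (T x₀)) := by
          rw [hxsucc 0, hx0, hN_def]
          simp [hC0]
        rw [h9, norm_neg]
        have : q (T x₀) = e0.symm (T x₀) := rfl
        rw [this]
        calc ‖e0.symm (T x₀)‖ ≤ lam := h1
          _ = ε 0 - ε 1 := hεlam.symm
    | succ k ih =>
      obtain ⟨ih1, ih2⟩ := ih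
      have hx1ρ : ‖x (k + 1) - x₀‖ ≤ ρ - ε (k + 1) := by
        calc ‖x (k + 1) - x₀‖ ≤ ‖x (k + 1) - x k‖ + ‖x k - x₀‖ :=
              norm_sub_le_norm_sub_add_norm_sub _ _ _
          _ ≤ (ε k - ε (k + 1)) + (ρ - ε k) := add_le_add ih2 ih1
          _ = ρ - ε (k + 1) := by ring
      refine ⟨hx1ρ, ?_⟩
      have hz1 : x (k + 1) ∈ Metric.closedBall x₀ ρ := by
        rw [mem_closedBall_iff_norm]
        linarith [hεnn (k + 1)]
      have hz0 : x k ∈ Metric.closedBall x₀ ρ := by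
        rw [mem_closedBall_iff_norm]
        linarith [hεnn k]
      have hd : 0 ≤ ε k - ε (k + 1) := by linarith [hεle k]
      have hT1 : ‖T (x (k + 1))‖ ≤ nu / 2 * (ε k - ε (k + 1)) ^ 2 := by
        have h5 := htay (x k) (hsubρr hz0) (x (k + 1)) (hsubρr hz1)
        have h6 : T (x (k + 1)) - T (x k) - T' (x k) (x (k + 1) - x k) = T (x (k + 1)) := by
          rw [hxsucc k, hTstep (x k) hz0]
          abel
        rw [h6] at h5
        calc ‖T (x (k + 1))‖ ≤ nu / 2 * ‖x (k + 1) - x k‖ ^ 2 := h5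
          _ ≤ nu / 2 * (ε k - ε (k + 1)) ^ 2 := by
              apply mul_le_mul_of_nonneg_left _ (by positivity)
              exact pow_le_pow_left₀ (norm_nonneg _) ih2 2
      have hstep : x (k + 2) - x (k + 1) =
          -((Ring.inverse (C (x (k + 1)))) (q (T (x (k + 1))))) := by
        rw [hxsucc (k + 1), hN_def]
        simp
      rw [hstep, norm_neg]
      have h7 := hkey (x (k + 1)) hz1 (T (x (k + 1)))
      have h8 : 0 < s + a * ε (k + 1) := by
        have := mul_nonneg ha.le (hεnn (k + 1))
        linarith
      have h9 : s + a * ε (k + 1) ≤ 1 - a * ‖x (k + 1) - x₀‖ := by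
        have h10 := mul_le_mul_of_nonneg_left hx1ρ ha.le
        rw [mul_sub] at h10
        linarith [haρ]
      have h11 : 0 < 1 - a * ‖x (k + 1) - x₀‖ := lt_of_lt_of_le h8 h9
      calc ‖(Ring.inverse (C (x (k + 1)))) (q (T (x (k + 1))))‖
          ≤ mu / (1 - a * ‖x (k + 1) - x₀‖) * ‖T (x (k + 1))‖ := h7
        _ ≤ mu / (s + a * ε (k + 1)) * (nu / 2 * (ε k - ε (k + 1)) ^ 2) := by
            apply mul_le_mul _ hT1 (norm_nonneg _) (div_nonneg hmu.le h8.le)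
            apply div_le_div_of_nonneg_left hmu.le h8 h9
        _ = a / 2 * (ε k - ε (k + 1)) ^ 2 / (s + a * ε (k + 1)) := by
            rw [div_mul_eq_mul_div]
            congr 1
            rw [ha_def]
            ring
        _ = ε (k + 1) - ε (k + 2) := (hεkey k).symm
  have hmem : ∀ k, x k ∈ Metric.closedBall x₀ ρ := by
    intro k
    rw [mem_closedBall_iff_norm]
    linarith [(main k).1, hεnn k]
  -- Cauchy & convergence
  have hcauchy : CauchySeq x := by
    apply cauchySeq_of_le_geometric (1 / 2) ρ (by norm_num)
    intro k
    rw [dist_eq_norm, norm_sub_rev]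
    calc ‖x (k + 1) - x k‖ ≤ ε k - ε (k + 1) := (main k).2
      _ ≤ ε k := by linarith [hεnn (k + 1)]
      _ ≤ ρ * (1 / 2) ^ k := hεgeom k
  obtain ⟨xs, hxs⟩ := cauchySeq_tendsto_of_complete hcauchy
  have hxsρ : xs ∈ Metric.closedBall x₀ ρ :=
    isClosed_closedBall.mem_of_tendsto hxs (Filter.Eventually.of_forall hmem)
  have hTxs : T xs = 0 := by
    have hshift : Filter.Tendsto (fun k => x (k + 1)) Filter.atTop (nhds xs) :=
      hxs.comp (Filter.tendsto_add_atTop_nat 1)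
    have hcont : Filter.Tendsto (fun k => T (x (k + 1))) Filter.atTop (nhds (T xs)) := by
      have : ContinuousAt T xs := (hT xs (hball (hsubρr hxsρ))).continuousAt
      exact (this.tendsto).comp hshift
    have hzero : Filter.Tendsto (fun k => T (x (k + 1))) Filter.atTop (nhds 0) := by
      apply squeeze_zero_norm (a := fun k => nu / 2 * (ρ * (1 / 2) ^ k) ^ 2)
      · intro k
        have hd : 0 ≤ ε k - ε (k + 1) := by linarith [hεle k]
        have hb : ε k - ε (k + 1) ≤ ρ * (1 / 2) ^ k := by linarith [hεnn (k + 1), hεgeom k]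
        have h5 := htay (x k) (hsubρr (hmem k)) (x (k + 1)) (hsubρr (hmem (k + 1)))
        have h6 : T (x (k + 1)) - T (x k) - T' (x k) (x (k + 1) - x k) = T (x (k + 1)) := by
          rw [hxsucc k, hTstep (x k) (hmem k)]
          abel
        rw [h6] at h5
        calc ‖T (x (k + 1))‖ ≤ nu / 2 * ‖x (k + 1) - x k‖ ^ 2 := h5
          _ ≤ nu / 2 * (ρ * (1 / 2) ^ k) ^ 2 := by
              apply mul_le_mul_of_nonneg_left _ (by positivity)
              apply pow_le_pow_left₀ (norm_nonneg _) _ 2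
              calc ‖x (k + 1) - x k‖ ≤ ε k - ε (k + 1) := (main k).2
                _ ≤ ρ * (1 / 2) ^ k := hb
      · have heq : (fun k : ℕ => nu / 2 * (ρ * (1 / 2) ^ k) ^ 2)
            = fun k : ℕ => nu / 2 * ρ ^ 2 * ((1 : ℝ) / 4) ^ k := by
          funext k
          have h14 : ((1 : ℝ) / 4) ^ k = (((1 : ℝ) / 2) ^ k) ^ 2 := by
            rw [show ((1 : ℝ) / 4) = ((1 : ℝ) / 2) ^ 2 by norm_num, ← pow_mul, ← pow_mul,
              mul_comm]
          rw [h14]; ring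
        rw [heq]
        have h4 : Filter.Tendsto (fun k : ℕ => ((1 : ℝ) / 4) ^ k) Filter.atTop (nhds 0) :=
          tendsto_pow_atTop_nhds_zero_of_lt_one (by norm_num) (by norm_num)
        have h5 := h4.const_mul (nu / 2 * ρ ^ 2)
        rwa [mul_zero] at h5
    exact tendsto_nhds_unique hcont hzero
  -- the equivalences at each step
  have heqs : ∀ k, ∃ ek : X ≃L[ℝ] Y, (ek : X →L[ℝ] Y) = T' (x k) ∧
      x (k + 1) = x k - ek.symm (T (x k)) := by
    intro k
    set U : (X →L[ℝ] X)ˣ := Units.oneSub (w (x k)) (hwlt (x k) (hmem k)) with hU_def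
    refine ⟨(ContinuousLinearEquiv.ofUnit U).trans e0, ?_, ?_⟩
    · ext v
      show e0 ((U : X →L[ℝ] X) v) = T' (x k) v
      have hUC : (U : X →L[ℝ] X) = C (x k) := by
        rw [hU_def, Units.val_oneSub, ← hCw]
      rw [hUC]
      show e0 (e0.symm (T' (x k) v)) = T' (x k) v
      rw [e0.apply_symm_apply]
    · rw [hxsucc k, hN_def]
      show x k - (Ring.inverse (C (x k))) (q (T (x k))) = _
      congr 1
      rw [hinvC (x k) (hmem k)]
      rfl
  refine ⟨hρr, x, hx0, hmem, heqs, xs, hxs, hxsρ, hTxs, ?_⟩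
  -- Uniqueness
  intro y hy hTy
  have huniq : ∀ k, ‖y - x k‖ ≤ ε k := by
    intro k
    induction k with
    | zero =>
      rw [hx0, hε0]
      exact mem_closedBall_iff_norm.mp hy
    | succ k ih =>
      have hz0 := hmem k
      have h12 : y - x (k + 1) =
          (Ring.inverse (C (x k))) (q (T' (x k) (y - x k) + T (x k))) := by
        have h13 : (Ring.inverse (C (x k))) (q (T' (x k) (y - x k))) = y - x k := by
          have : q (T' (x k) (y - x k)) = C (x k) (y - x k) := rfl
          rw [this, happ' (x k) hz0]
        rw [map_add, map_add, h13]
        rw [hxsucc k, hN_def]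
        show y - (x k - (Ring.inverse (C (x k))) (q (T (x k)))) =
          y - x k + (Ring.inverse (C (x k))) (q (T (x k)))
        abel
      have h14 : T' (x k) (y - x k) + T (x k) = -(T y - T (x k) - T' (x k) (y - x k)) := by
        rw [hTy]
        abel
      have h15 : ‖T' (x k) (y - x k) + T (x k)‖ ≤ nu / 2 * ‖y - x k‖ ^ 2 := by
        rw [h14, norm_neg]
        exact htay (x k) (hsubρr hz0) y (hsubρr hy)
      have h16 := hkey (x k) hz0 (T' (x k) (y - x k) + T (x k))
      have h8 : 0 < s + a * ε k := by
        have := mul_nonneg ha.le (hεnn k)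
        linarith
      have h9 : s + a * ε k ≤ 1 - a * ‖x k - x₀‖ := by
        have h10 := mul_le_mul_of_nonneg_left (main k).1 ha.le
        rw [mul_sub] at h10
        linarith [haρ]
      have h11 : 0 < 1 - a * ‖x k - x₀‖ := lt_of_lt_of_le h8 h9
      have hyk : ‖y - x k‖ ^ 2 ≤ ε k ^ 2 := pow_le_pow_left₀ (norm_nonneg _) ih 2
      calc ‖y - x (k + 1)‖
          ≤ mu / (1 - a * ‖x k - x₀‖) * ‖T' (x k) (y - x k) + T (x k)‖ := by
            rw [h12]; exact h16
        _ ≤ mu / (s + a * ε k) * (nu / 2 * ε k ^ 2) := by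
            apply mul_le_mul _ _ (norm_nonneg _) (div_nonneg hmu.le h8.le)
            · exact div_le_div_of_nonneg_left hmu.le h8 h9
            · calc ‖T' (x k) (y - x k) + T (x k)‖ ≤ nu / 2 * ‖y - x k‖ ^ 2 := h15
                _ ≤ nu / 2 * ε k ^ 2 := by
                    apply mul_le_mul_of_nonneg_left hyk (by positivity)
        _ = a / 2 * ε k ^ 2 / (s + a * ε k) := by
            rw [div_mul_eq_mul_div]
            congr 1
            rw [ha_def]
            ring
        _ = ε (k + 1) := by rw [hε_def, nkEps_succ]
  have hxy : Filter.Tendsto x Filter.atTop (nhds y) := by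
    rw [tendsto_iff_dist_tendsto_zero]
    apply squeeze_zero (fun k => dist_nonneg)
      (g := fun k => ρ * (1 / 2) ^ k)
    · intro k
      rw [dist_eq_norm, norm_sub_rev]
      exact le_trans (huniq k) (hεgeom k)
    · have h4 : Filter.Tendsto (fun k : ℕ => ((1 : ℝ) / 2) ^ k) Filter.atTop (nhds 0) :=
        tendsto_pow_atTop_nhds_zero_of_lt_one (by norm_num) (by norm_num)
      have h5 := h4.const_mul ρ
      rwa [mul_zero] at h5
  exact tendsto_nhds_unique hxy hxs
end
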